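/- arXiv:1007.2255 — 4 statements merged into one kernel-verified Lean document; each statement's English description precedes it below -/
import Mathlib

section
/- Let ν be a probability measure on configurations σ ∈ Ω ⊆ {0,1}^V of a spin system on a finite graph with n vertices, let A: Ω → {0,1} be any function, and suppose r := min_{x∈{0,1}} [ν(A(σ)=x and σ(r)=x) − ν(A(σ)=x)·ν(σ(r)=x)] > 0 (where r is a distinguished vertex). Let S_A(σ) = (1/n)·#{v : A(σ^v) ≠ A(σ)} where σ^v flips σ at v, and let S̄ = E_{σ∼ν}[S_A(σ)·1{A(σ)=1}]. Then the conductance of the heat-bath Glauber dynamics (which updates one uniformly random vertex per step and is reversible with respect to ν) at the set U = {σ : A(σ)=1} satisfies Φ_U ≤ S̄ / r², and hence the relaxation time satisfies T_rel ≥ r² / (2 S̄). -/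
open Finset

/-- Dirichlet form of a reversible chain on configurations. -/
noncomputable def dirichletForm {S : Type*} [Fintype S]
    (P : S → S → ℝ) (π : S → ℝ) (f : S → ℝ) : ℝ :=
  (1 / 2) * ∑ x, ∑ y, π x * P x y * (f x - f y) ^ 2

/-- Variance of `f` with respect to `π`. -/
noncomputable def piVar {S : Type*} [Fintype S] (π : S → ℝ) (f : S → ℝ) : ℝ :=
  (∑ x, π x * f x ^ 2) - (∑ x, π x * f x) ^ 2

/-- Variational spectral gap of a reversible chain. -/
noncomputable def specGap {S : Type*} [Fintype S]
    (P : S → S → ℝ) (π : S → ℝ) : ℝ :=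
  sInf ((fun f : S → ℝ => dirichletForm P π f / piVar π f) ''
    {f : S → ℝ | piVar π f ≠ 0})

/-- Heat-bath Glauber dynamics for a measure `ν` on `{0,1}^V`: pick a uniformly random
vertex and resample its spin from the conditional distribution given the others. -/
noncomputable def glauberP {V : Type*} [Fintype V] [DecidableEq V]
    (ν : (V → Bool) → ℝ) (σ τ : V → Bool) : ℝ :=
  (1 / (Fintype.card V : ℝ)) * ∑ v : V,
    ((if τ = Function.update σ v true then
        ν (Function.update σ v true) /
          (ν (Function.update σ v true) + ν (Function.update σ v false)) else 0) +
     (if τ = Function.update σ v false then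
        ν (Function.update σ v false) /
          (ν (Function.update σ v true) + ν (Function.update σ v false)) else 0))

section Aux
variable {V : Type*} [Fintype V] [DecidableEq V]

lemma agree_off (σ τ : V → Bool) (v : V) (c : Bool) (h : τ = Function.update σ v c)
    (w : V) (hw : w ≠ v) : τ w = σ w := by
  subst h; simp [Function.update_of_ne hw]

lemma term_rev (ν : (V → Bool) → ℝ) (σ τ : V → Bool) (v : V) :
    ν σ * ((if τ = Function.update σ v true then
        ν (Function.update σ v true) /
          (ν (Function.update σ v true) + ν (Function.update σ v false)) else 0) +
     (if τ = Function.update σ v false then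
        ν (Function.update σ v false) /
          (ν (Function.update σ v true) + ν (Function.update σ v false)) else 0)) =
    ν τ * ((if σ = Function.update τ v true then
        ν (Function.update τ v true) /
          (ν (Function.update τ v true) + ν (Function.update τ v false)) else 0) +
     (if σ = Function.update τ v false then
        ν (Function.update τ v false) /
          (ν (Function.update τ v true) + ν (Function.update τ v false)) else 0)) := by
  by_cases hag : ∀ w, w ≠ v → τ w = σ w
  · -- updates agree
    have hu : ∀ c, Function.update τ v c = Function.update σ v c := by
      intro c; funext w
      rcases eq_or_ne w v with rfl | hw
      · simp
      · simp [Function.update_of_ne hw, hag w hw]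
    have hτ : τ = Function.update σ v (τ v) := by
      funext w
      rcases eq_or_ne w v with rfl | hw
      · simp
      · simp [Function.update_of_ne hw, hag w hw]
    have hσ : σ = Function.update σ v (σ v) := by simp
    rw [hu true, hu false]
    have hinj := Function.update_injective σ v
    cases hb : σ v <;> cases hc : τ v
    · have h1 : τ = Function.update σ v false := by rw [hτ, hc]
      have h2 : σ = Function.update σ v false := by conv_lhs => rw [hσ, hb]
      have hne : ¬ τ = Function.update σ v true := fun h =>
        Bool.noConfusion (hinj (h1.symm.trans h))
      have hne2 : ¬ σ = Function.update σ v true := fun h =>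
        Bool.noConfusion (hinj (h2.symm.trans h))
      rw [if_neg hne, if_pos h1, if_neg hne2, if_pos h2, congrArg ν h1, congrArg ν h2]
    · have h1 : τ = Function.update σ v true := by rw [hτ, hc]
      have h2 : σ = Function.update σ v false := by conv_lhs => rw [hσ, hb]
      have hne : ¬ τ = Function.update σ v false := fun h =>
        Bool.noConfusion (hinj (h1.symm.trans h))
      have hne2 : ¬ σ = Function.update σ v true := fun h =>
        Bool.noConfusion (hinj (h2.symm.trans h))
      rw [if_pos h1, if_neg hne, if_neg hne2, if_pos h2, congrArg ν h1, congrArg ν h2]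
      ring
    · have h1 : τ = Function.update σ v false := by rw [hτ, hc]
      have h2 : σ = Function.update σ v true := by conv_lhs => rw [hσ, hb]
      have hne : ¬ τ = Function.update σ v true := fun h =>
        Bool.noConfusion (hinj (h1.symm.trans h))
      have hne2 : ¬ σ = Function.update σ v false := fun h =>
        Bool.noConfusion (hinj (h2.symm.trans h))
      rw [if_neg hne, if_pos h1, if_pos h2, if_neg hne2, congrArg ν h1, congrArg ν h2]
      ring
    · have h1 : τ = Function.update σ v true := by rw [hτ, hc]
      have h2 : σ = Function.update σ v true := by conv_lhs => rw [hσ, hb]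
      have hne : ¬ τ = Function.update σ v false := fun h =>
        Bool.noConfusion (hinj (h1.symm.trans h))
      have hne2 : ¬ σ = Function.update σ v false := fun h =>
        Bool.noConfusion (hinj (h2.symm.trans h))
      rw [if_pos h1, if_neg hne, if_pos h2, if_neg hne2, congrArg ν h1, congrArg ν h2]
  · -- no agreement: all four conditions fail
    push_neg at hag
    obtain ⟨w, hw, hne⟩ := hag
    have f1 : ∀ c, ¬ τ = Function.update σ v c := by
      intro c h; exact hne (agree_off σ τ v c h w hw)
    have f2 : ∀ c, ¬ σ = Function.update τ v c := by
      intro c h; exact hne (agree_off τ σ v c h w hw).symm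
    rw [if_neg (f1 true), if_neg (f1 false), if_neg (f2 true), if_neg (f2 false)]
    ring
end Aux

section Aux2
variable {V : Type*} [Fintype V] [DecidableEq V]

lemma glauberP_nonneg (ν : (V → Bool) → ℝ) (hν0 : ∀ σ, 0 ≤ ν σ) (σ τ : V → Bool) :
    0 ≤ glauberP ν σ τ := by
  unfold glauberP
  apply mul_nonneg (by positivity)
  apply Finset.sum_nonneg
  intro v _
  apply add_nonneg <;>
  · split
    · exact div_nonneg (hν0 _) (add_nonneg (hν0 _) (hν0 _))
    · exact le_refl 0

lemma detailed_balance (ν : (V → Bool) → ℝ) (σ τ : V → Bool) :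
    ν σ * glauberP ν σ τ = ν τ * glauberP ν τ σ := by
  unfold glauberP
  have h1 : ∀ (c : ℝ) (g : V → ℝ),
      c * ((1 / (Fintype.card V : ℝ)) * ∑ v, g v)
      = (1 / (Fintype.card V : ℝ)) * ∑ v, c * g v := by
    intro c g; rw [← Finset.mul_sum]; ring
  rw [h1, h1]
  congr 1
  exact Finset.sum_congr rfl fun v _ => term_rev ν σ τ v

/-- single-vertex escape probability bound -/
lemma escape_sum (ν : (V → Bool) → ℝ) (hν0 : ∀ σ, 0 ≤ ν σ) (A : (V → Bool) → Bool)
    (σ : V → Bool) (hσ : A σ = true) (v : V) :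
    (∑ τ : V → Bool, if A τ = false then
      ((if τ = Function.update σ v true then
        ν (Function.update σ v true) /
          (ν (Function.update σ v true) + ν (Function.update σ v false)) else 0) +
       (if τ = Function.update σ v false then
        ν (Function.update σ v false) /
          (ν (Function.update σ v true) + ν (Function.update σ v false)) else 0)) else 0)
    ≤ (if A (Function.update σ v (!σ v)) ≠ A σ then (1:ℝ) else 0) := by
  set a := Function.update σ v true with ha
  set b := Function.update σ v false with hb
  set D := ν a + ν b with hD
  have hab : a ≠ b := by
    rw [ha, hb]; intro h; exact Bool.noConfusion (Function.update_injective σ v h)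
  have hDnn : 0 ≤ D := add_nonneg (hν0 _) (hν0 _)
  have hpa : ν a / D ≤ 1 := by
    rcases eq_or_lt_of_le hDnn with h | h
    · simp [← h]
    · exact div_le_one_of_le₀ (by rw [hD]; linarith [hν0 b]) (le_of_lt h)
  have hpb : ν b / D ≤ 1 := by
    rcases eq_or_lt_of_le hDnn with h | h
    · simp [← h]
    · exact div_le_one_of_le₀ (by rw [hD]; linarith [hν0 a]) (le_of_lt h)
  have hsum : (∑ τ : V → Bool, if A τ = false then
      ((if τ = a then ν a / D else 0) + (if τ = b then ν b / D else 0)) else 0)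
      = (if A a = false then ν a / D else 0) + (if A b = false then ν b / D else 0) := by
    have e1 : ∀ τ : V → Bool, (if A τ = false then
        ((if τ = a then ν a / D else 0) + (if τ = b then ν b / D else 0)) else 0)
        = (if τ = a then (if A a = false then ν a / D else 0) else 0)
          + (if τ = b then (if A b = false then ν b / D else 0) else 0) := by
      intro τ
      by_cases h1 : τ = a
      · subst h1; simp [hab]
      · by_cases h2 : τ = b
        · subst h2; simp [h1]
        · simp [h1, h2]
    rw [Finset.sum_congr rfl fun τ _ => e1 τ, Finset.sum_add_distrib,
      Finset.sum_ite_eq' univ a, Finset.sum_ite_eq' univ b]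
    simp
  rw [hsum]
  cases hbv : σ v
  · -- σ v = false : b = σ
    have hbσ : b = σ := by rw [hb, ← hbv]; exact Function.update_eq_self v σ
    have hup : Function.update σ v (!false) = a := by rw [Bool.not_false, ha]
    rw [hup, hbσ, hσ]
    rcases Bool.eq_false_or_eq_true (A a) with h | h
    · simp [h]
    · simpa [h] using hpa
  · have haσ : a = σ := by rw [ha, ← hbv]; exact Function.update_eq_self v σ
    have hup : Function.update σ v (!true) = b := by rw [Bool.not_true, hb]
    rw [hup, haσ, hσ]
    rcases Bool.eq_false_or_eq_true (A b) with h | h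
    · simp [h]
    · simpa [h] using hpb

lemma escape_bound (ν : (V → Bool) → ℝ) (hν0 : ∀ σ, 0 ≤ ν σ) (A : (V → Bool) → Bool)
    (σ : V → Bool) (hσ : A σ = true) :
    (∑ τ : V → Bool, if A τ = false then glauberP ν σ τ else 0)
    ≤ (1 / (Fintype.card V : ℝ)) *
      ((univ.filter (fun v : V => A (Function.update σ v (!σ v)) ≠ A σ)).card : ℝ) := by
  have key : ∀ τ : V → Bool, (if A τ = false then glauberP ν σ τ else 0)
      = (1 / (Fintype.card V : ℝ)) * ∑ v : V,
        (if A τ = false then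
          ((if τ = Function.update σ v true then
            ν (Function.update σ v true) /
              (ν (Function.update σ v true) + ν (Function.update σ v false)) else 0) +
           (if τ = Function.update σ v false then
            ν (Function.update σ v false) /
              (ν (Function.update σ v true) + ν (Function.update σ v false)) else 0))
          else 0) := by
    intro τ
    unfold glauberP
    by_cases h : A τ = false <;> simp [h]
  rw [Finset.sum_congr rfl fun τ _ => key τ, ← Finset.mul_sum, Finset.sum_comm]
  apply mul_le_mul_of_nonneg_left _ (by positivity)
  rw [← Finset.sum_boole]
  exact Finset.sum_le_sum fun v _ => escape_sum ν hν0 A σ hσ v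

end Aux2

lemma piVar_nonneg {S : Type*} [Fintype S] (π : S → ℝ) (h0 : ∀ x, 0 ≤ π x)
    (h1 : ∑ x, π x = 1) (f : S → ℝ) : 0 ≤ piVar π f := by
  unfold piVar
  rw [sub_nonneg]
  have key := Finset.sum_mul_sq_le_sq_mul_sq univ
    (fun x => Real.sqrt (π x)) (fun x => Real.sqrt (π x) * f x)
  have e1 : ∀ x : S, Real.sqrt (π x) * (Real.sqrt (π x) * f x) = π x * f x := by
    intro x; rw [← mul_assoc, Real.mul_self_sqrt (h0 x)]
  have e2 : ∀ x : S, Real.sqrt (π x) ^ 2 = π x := fun x => Real.sq_sqrt (h0 x)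
  have e3 : ∀ x : S, (Real.sqrt (π x) * f x) ^ 2 = π x * f x ^ 2 := by
    intro x; rw [mul_pow, e2]
  rw [Finset.sum_congr rfl fun x _ => e1 x, Finset.sum_congr rfl fun x _ => e2 x,
    Finset.sum_congr rfl fun x _ => e3 x, h1, one_mul] at key
  exact key


/-- Turning a reconstruction function into a set of poor conductance: if
`r = min_x [ν(A=x ∧ σ(root)=x) − ν(A=x)ν(σ(root)=x)] > 0` and `S̄` is the average
sensitivity of `A`, then the conductance of `U = {σ : A(σ)=1}` for the Glauber dynamics
satisfies `Φ_U ≤ S̄/r²`, whence the relaxation time is at least `r²/(2S̄)`. -/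
theorem stmt3 (V : Type*) [Fintype V] [DecidableEq V]
    (n : ℕ) (hn : n = Fintype.card V) (hn1 : 0 < n)
    (ν : (V → Bool) → ℝ) (hν0 : ∀ σ, 0 ≤ ν σ) (hν1 : ∑ σ : V → Bool, ν σ = 1)
    (A : (V → Bool) → Bool) (r0 : V) (r : ℝ)
    (hr : r = min
      ((∑ σ : V → Bool, if A σ = true ∧ σ r0 = true then ν σ else 0) -
        (∑ σ : V → Bool, if A σ = true then ν σ else 0) *
        (∑ σ : V → Bool, if σ r0 = true then ν σ else 0))
      ((∑ σ : V → Bool, if A σ = false ∧ σ r0 = false then ν σ else 0) -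
        (∑ σ : V → Bool, if A σ = false then ν σ else 0) *
        (∑ σ : V → Bool, if σ r0 = false then ν σ else 0)))
    (hrpos : 0 < r)
    (Sbar : ℝ)
    (hSbar : Sbar = ∑ σ : V → Bool,
      ν σ * ((1 / (n : ℝ)) *
        ((univ.filter (fun v : V =>
          A (Function.update σ v (!σ v)) ≠ A σ)).card : ℝ)) *
        (if A σ = true then 1 else 0))
    (ΦU : ℝ)
    (hΦU : ΦU = (∑ σ : V → Bool, ∑ τ : V → Bool,
        if A σ = true ∧ A τ = false then ν σ * glauberP ν σ τ else 0) /
      ((∑ σ : V → Bool, if A σ = true then ν σ else 0) *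
        (1 - ∑ σ : V → Bool, if A σ = true then ν σ else 0))) :
    ΦU ≤ Sbar / r ^ 2 ∧
    (0 < specGap (glauberP ν) ν →
      r ^ 2 / (2 * Sbar) ≤ 1 / specGap (glauberP ν) ν) := by
  subst hn
  set νU := ∑ σ : V → Bool, if A σ = true then ν σ else 0 with hνU
  set Q := ∑ σ : V → Bool, ∑ τ : V → Bool,
      if A σ = true ∧ A τ = false then ν σ * glauberP ν σ τ else 0 with hQdef
  -- nonnegativity of basic sums
  have ite_nn : ∀ (p : (V → Bool) → Prop) [DecidablePred p],
      (0:ℝ) ≤ ∑ σ : V → Bool, if p σ then ν σ else 0 := by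
    intro p _
    apply Finset.sum_nonneg
    intro σ _
    split
    · exact hν0 σ
    · exact le_refl 0
  have hU_nn : 0 ≤ νU := ite_nn _
  -- νU ≥ r
  have hrU : r ≤ νU := by
    have h1 : r ≤ (∑ σ : V → Bool, if A σ = true ∧ σ r0 = true then ν σ else 0) -
        νU * (∑ σ : V → Bool, if σ r0 = true then ν σ else 0) := hr ▸ min_le_left _ _
    have h2 : (∑ σ : V → Bool, if A σ = true ∧ σ r0 = true then ν σ else 0) ≤ νU := by
      apply Finset.sum_le_sum
      intro σ _
      split_ifs with ha hb
      · exact le_refl _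
      · exact absurd ha.1 hb
      · exact hν0 σ
      · exact le_refl 0
    have h3 : 0 ≤ νU * (∑ σ : V → Bool, if σ r0 = true then ν σ else 0) :=
      mul_nonneg hU_nn (ite_nn _)
    linarith
  -- 1 - νU ≥ r
  have hsplit : νU + (∑ σ : V → Bool, if A σ = false then ν σ else 0) = 1 := by
    rw [hνU, ← Finset.sum_add_distrib, ← hν1]
    apply Finset.sum_congr rfl
    intro σ _
    cases h : A σ <;> simp [h]
  have hr1U : r ≤ 1 - νU := by
    have h1 : r ≤ (∑ σ : V → Bool, if A σ = false ∧ σ r0 = false then ν σ else 0) -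
        (∑ σ : V → Bool, if A σ = false then ν σ else 0) *
        (∑ σ : V → Bool, if σ r0 = false then ν σ else 0) := hr ▸ min_le_right _ _
    have h2 : (∑ σ : V → Bool, if A σ = false ∧ σ r0 = false then ν σ else 0) ≤
        (∑ σ : V → Bool, if A σ = false then ν σ else 0) := by
      apply Finset.sum_le_sum
      intro σ _
      split_ifs with ha hb
      · exact le_refl _
      · exact absurd ha.1 hb
      · exact hν0 σ
      · exact le_refl 0
    have h3 : 0 ≤ (∑ σ : V → Bool, if A σ = false then ν σ else 0) *
        (∑ σ : V → Bool, if σ r0 = false then ν σ else 0) :=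
      mul_nonneg (ite_nn _) (ite_nn _)
    linarith
  -- Q ≤ Sbar
  have hQSbar : Q ≤ Sbar := by
    rw [hQdef, hSbar]
    apply Finset.sum_le_sum
    intro σ _
    by_cases hA : A σ = true
    · have e : (∑ τ : V → Bool, if A σ = true ∧ A τ = false then ν σ * glauberP ν σ τ else 0)
          = ν σ * ∑ τ : V → Bool, if A τ = false then glauberP ν σ τ else 0 := by
        rw [Finset.mul_sum]
        apply Finset.sum_congr rfl
        intro τ _
        by_cases hτ : A τ = false <;> simp [hA, hτ]
      rw [e, if_pos hA, mul_one]
      exact mul_le_mul_of_nonneg_left (escape_bound ν hν0 A σ hA) (hν0 σ)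
    · simp [hA]
  have hQ_nn : 0 ≤ Q := by
    rw [hQdef]
    apply Finset.sum_nonneg
    intro σ _
    apply Finset.sum_nonneg
    intro τ _
    split
    · exact mul_nonneg (hν0 σ) (glauberP_nonneg ν hν0 σ τ)
    · exact le_refl 0
  have hSbar_nn : 0 ≤ Sbar := le_trans hQ_nn hQSbar
  have hD : r ^ 2 ≤ νU * (1 - νU) := by
    have := mul_le_mul hrU hr1U (le_of_lt hrpos) hU_nn
    nlinarith
  have part1 : ΦU ≤ Sbar / r ^ 2 := by
    rw [hΦU]
    exact div_le_div₀ hSbar_nn hQSbar (by positivity) hD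
  refine ⟨part1, ?_⟩
  intro hgap
  -- the indicator test function
  set f : (V → Bool) → ℝ := fun σ => if A σ = true then 1 else 0 with hf
  have hvar : piVar ν f = νU * (1 - νU) := by
    unfold piVar
    have h2 : ∀ σ : V → Bool, ν σ * f σ ^ 2 = (if A σ = true then ν σ else 0) := by
      intro σ; by_cases h : A σ = true <;> simp [hf, h]
    have h3 : ∀ σ : V → Bool, ν σ * f σ = (if A σ = true then ν σ else 0) := by
      intro σ; by_cases h : A σ = true <;> simp [hf, h]
    rw [Finset.sum_congr rfl fun σ _ => h2 σ, Finset.sum_congr rfl fun σ _ => h3 σ,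
      ← hνU]
    ring
  have hvar_pos : 0 < piVar ν f := by
    rw [hvar]; exact lt_of_lt_of_le (pow_pos hrpos 2) hD
  have hdir : dirichletForm (glauberP ν) ν f = Q := by
    unfold dirichletForm
    have hterm : ∀ σ τ : V → Bool, ν σ * glauberP ν σ τ * (f σ - f τ) ^ 2
        = (if A σ = true ∧ A τ = false then ν σ * glauberP ν σ τ else 0)
        + (if A σ = false ∧ A τ = true then ν σ * glauberP ν σ τ else 0) := by
      intro σ τ
      cases h1 : A σ <;> cases h2 : A τ <;> simp [hf, h1, h2] <;> ring
    have hQ' : (∑ σ : V → Bool, ∑ τ : V → Bool,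
        if A σ = false ∧ A τ = true then ν σ * glauberP ν σ τ else 0) = Q := by
      rw [Finset.sum_comm, hQdef]
      apply Finset.sum_congr rfl
      intro x _
      apply Finset.sum_congr rfl
      intro y _
      by_cases h : A x = true ∧ A y = false
      · rw [if_pos ⟨h.2, h.1⟩, if_pos h, detailed_balance ν y x]
      · rw [if_neg (fun hc => h ⟨hc.2, hc.1⟩), if_neg h]
    calc (1/2 : ℝ) * ∑ σ : V → Bool, ∑ τ : V → Bool,
          ν σ * glauberP ν σ τ * (f σ - f τ) ^ 2
        = (1/2 : ℝ) * ((∑ σ : V → Bool, ∑ τ : V → Bool,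
            if A σ = true ∧ A τ = false then ν σ * glauberP ν σ τ else 0)
          + (∑ σ : V → Bool, ∑ τ : V → Bool,
            if A σ = false ∧ A τ = true then ν σ * glauberP ν σ τ else 0)) := by
          rw [← Finset.sum_add_distrib]
          congr 1
          apply Finset.sum_congr rfl
          intro σ _
          rw [← Finset.sum_add_distrib]
          exact Finset.sum_congr rfl fun τ _ => hterm σ τ
      _ = Q := by rw [hQ', ← hQdef]; ring
  -- spectral gap bound via the test function
  have hbdd : BddBelow ((fun g : (V → Bool) → ℝ =>
      dirichletForm (glauberP ν) ν g / piVar ν g) '' {g | piVar ν g ≠ 0}) := by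
    refine ⟨0, ?_⟩
    rintro x ⟨g, hg, rfl⟩
    have hdn : 0 ≤ dirichletForm (glauberP ν) ν g := by
      unfold dirichletForm
      apply mul_nonneg (by norm_num)
      apply Finset.sum_nonneg
      intro σ _
      apply Finset.sum_nonneg
      intro τ _
      exact mul_nonneg (mul_nonneg (hν0 σ) (glauberP_nonneg ν hν0 σ τ)) (sq_nonneg _)
    have hvg : 0 < piVar ν g :=
      lt_of_le_of_ne (piVar_nonneg ν hν0 hν1 g) (Ne.symm hg)
    exact div_nonneg hdn (le_of_lt hvg)
  have hmem : dirichletForm (glauberP ν) ν f / piVar ν f ∈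
      ((fun g : (V → Bool) → ℝ =>
        dirichletForm (glauberP ν) ν g / piVar ν g) '' {g | piVar ν g ≠ 0}) :=
    ⟨f, ne_of_gt hvar_pos, rfl⟩
  have hgapΦ : specGap (glauberP ν) ν ≤ Sbar / r ^ 2 := by
    have h1 : specGap (glauberP ν) ν ≤ dirichletForm (glauberP ν) ν f / piVar ν f := by
      unfold specGap
      exact csInf_le hbdd hmem
    rw [hdir, hvar] at h1
    calc specGap (glauberP ν) ν ≤ Q / (νU * (1 - νU)) := h1
      _ = ΦU := by rw [hΦU]
      _ ≤ Sbar / r ^ 2 := part1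
  have hSpos : 0 < Sbar := by
    have h1 : 0 < Sbar / r ^ 2 := lt_of_lt_of_le hgap hgapΦ
    rcases div_pos_iff.mp h1 with ⟨h, _⟩ | ⟨_, h⟩
    · exact h
    · exact absurd h (not_lt.mpr (sq_nonneg r))
  calc r ^ 2 / (2 * Sbar) ≤ r ^ 2 / Sbar :=
        div_le_div_of_nonneg_left (sq_nonneg r) hSpos (by linarith)
    _ = 1 / (Sbar / r ^ 2) := by rw [one_div_div]
    _ ≤ 1 / specGap (glauberP ν) ν := one_div_le_one_div_of_le hgap hgapΦ
end

section
/- Fix b ≥ 2, δ > 0, ω = (1+δ)·ln b / b, λ = ω(1+ω)^b, and suppose exp(2·(1.01)·(ωb)²/λ) ≤ 1.01. Define the sequence g_i by g_1 = 1/(1+ω), g_2 = (1/(1+ω))·(1 − (1/(1+ω))^b), and the recursion g_{i+1} = (ω/(1+ω))·(1 − (1 − g_{i-1}^b)^b) + (1/(1+ω))·(1 − g_i^b) for i ≥ 2. Then for all i ≥ 1, g_i ≤ (1.01)^{1/b}/(1+ω). -/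
/-!
Put `M = 1.01^{1/b}`. The recursion is `g_{i+1} = F(g_{i-1}, g_i)` for a map `F` sending
`[0, M/(1+ω)]²` into itself: by Bernoulli `1 - (1 - x^b)^b ≤ b x^b ≤ b M^b/(1+ω)^b`, so
`F(x, y) ≤ (1 + 1.01 ω b/(1+ω)^b)/(1+ω)`, and `1 + t ≤ e^t ≤ M` because the hypothesis on
`exp` bounds `b t` by `log 1.01`. Both `g_1` and `g_2 = F(0, g_1)` lie in that interval.
-/

open Set

theorem mem_of_two_step_rec {α : Type*} {S : Set α} {F : α → α → α} {g : ℕ → α}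
    (hF : ∀ x ∈ S, ∀ y ∈ S, F x y ∈ S) (h1 : g 1 ∈ S) (h2 : g 2 ∈ S)
    (hrec : ∀ i, 2 ≤ i → g (i + 1) = F (g (i - 1)) (g i)) :
    ∀ i, 1 ≤ i → g i ∈ S := by
  have hpair : ∀ i, 1 ≤ i → g i ∈ S ∧ g (i + 1) ∈ S := by
    intro i hi
    induction i, hi using Nat.le_induction with
    | base => exact ⟨h1, h2⟩
    | succ n hn ih =>
      refine ⟨ih.2, ?_⟩
      rw [hrec (n + 1) (by omega), Nat.add_sub_cancel]
      exact hF _ ih.1 _ ih.2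
  exact fun i hi => (hpair i hi).1

theorem one_sub_one_sub_pow_le {u : ℝ} (hu : u ≤ 2) (n : ℕ) : 1 - (1 - u) ^ n ≤ n * u := by
  have h := one_add_mul_le_pow (a := -u) (by linarith) n
  rw [← sub_eq_add_neg] at h
  linarith

theorem one_add_le_rpow_one_div {K t n : ℝ} (hK : 0 < K) (hn : 0 < n) (h : t * n ≤ Real.log K) :
    1 + t ≤ K ^ (1 / n) := by
  calc 1 + t ≤ Real.exp t := by linarith [Real.add_one_le_exp t]
    _ ≤ Real.exp (Real.log K * (1 / n)) := by
      rw [Real.exp_le_exp, mul_one_div, le_div_iff₀ hn]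
      exact h
    _ = K ^ (1 / n) := (Real.rpow_def_of_pos hK _).symm

theorem one_add_mul_div_pow_le_rpow {K ω : ℝ} {b : ℕ} (hK : 0 < K) (hω : 0 < ω) (hb : 0 < b)
    (hcond : Real.exp (2 * K * (ω * b) ^ 2 / (ω * (1 + ω) ^ b)) ≤ K) :
    1 + K * ω * b / (1 + ω) ^ b ≤ K ^ ((1 : ℝ) / b) := by
  refine one_add_le_rpow_one_div hK (by positivity) ?_
  have hlog := (Real.le_log_iff_exp_le hK).2 hcond
  have heq : 2 * K * (ω * b) ^ 2 / (ω * (1 + ω) ^ b) = 2 * (K * ω * b / (1 + ω) ^ b * b) := by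
    field_simp
  have hnn : 0 ≤ K * ω * b / (1 + ω) ^ b * b := by positivity
  linarith

/-- `F(g_{i-1}, g_i)` for the recursion of the reconstruction probabilities. -/
noncomputable def reconStep (ω : ℝ) (b : ℕ) (x y : ℝ) : ℝ :=
  ω / (1 + ω) * (1 - (1 - x ^ b) ^ b) + 1 / (1 + ω) * (1 - y ^ b)

section reconStep

variable {ω x y : ℝ} {b : ℕ}

theorem reconStep_nonneg (hω : 0 ≤ ω) (hx : x ∈ Icc (0 : ℝ) 1) (hy : y ∈ Icc (0 : ℝ) 1) :
    0 ≤ reconStep ω b x y := by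
  have hxb : x ^ b ∈ Icc (0 : ℝ) 1 := ⟨pow_nonneg hx.1 b, pow_le_one₀ hx.1 hx.2⟩
  have hyb : y ^ b ≤ 1 := pow_le_one₀ hy.1 hy.2
  have hinner : (1 - x ^ b) ^ b ≤ 1 := pow_le_one₀ (by linarith [hxb.2]) (by linarith [hxb.1])
  unfold reconStep
  apply add_nonneg <;> apply mul_nonneg (by positivity) <;> linarith

theorem reconStep_le {M : ℝ} (hω : 0 ≤ ω) (hx0 : 0 ≤ x) (hx1 : x ≤ 1) (hxM : x ≤ M / (1 + ω))
    (hy : 0 ≤ y) (hM : 1 + M ^ b * ω * b / (1 + ω) ^ b ≤ M) :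
    reconStep ω b x y ≤ M / (1 + ω) := by
  have hbern : 1 - (1 - x ^ b) ^ b ≤ b * (M ^ b / (1 + ω) ^ b) :=
    calc 1 - (1 - x ^ b) ^ b ≤ b * x ^ b :=
          one_sub_one_sub_pow_le (by linarith [pow_le_one₀ hx0 hx1 (n := b)]) b
      _ ≤ b * (M / (1 + ω)) ^ b := by gcongr
      _ = b * (M ^ b / (1 + ω) ^ b) := by rw [div_pow]
  calc reconStep ω b x y ≤ ω / (1 + ω) * (b * (M ^ b / (1 + ω) ^ b)) + 1 / (1 + ω) * 1 := by
        unfold reconStep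
        gcongr
        linarith [pow_nonneg hy b]
    _ = (1 + M ^ b * ω * b / (1 + ω) ^ b) / (1 + ω) := by ring
    _ ≤ M / (1 + ω) := by gcongr

theorem reconStep_mem_Icc {M : ℝ} (hω : 0 ≤ ω) (hM1 : M ≤ 1 + ω)
    (hM : 1 + M ^ b * ω * b / (1 + ω) ^ b ≤ M)
    (hx : x ∈ Icc 0 (M / (1 + ω))) (hy : y ∈ Icc 0 (M / (1 + ω))) :
    reconStep ω b x y ∈ Icc 0 (M / (1 + ω)) := by
  have hsub : Icc 0 (M / (1 + ω)) ⊆ Icc (0 : ℝ) 1 :=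
    Icc_subset_Icc_right ((div_le_one (by linarith)).2 hM1)
  exact ⟨reconStep_nonneg hω (hsub hx) (hsub hy),
    reconStep_le hω hx.1 (hsub hx).2 hx.2 hy.1 hM⟩

end reconStep

/-- Inductive bound `g_i ≤ 1.01^{1/b}/(1+ω)` for the probabilities that the bottom-up
reconstruction rule outputs 0 on the broadcast tree of height `i`. -/
theorem stmt4 (b : ℕ) (hb : 2 ≤ b) (δ ω lam : ℝ) (hδ : 0 < δ)
    (hω : ω = (1 + δ) * Real.log b / b) (hlam : lam = ω * (1 + ω) ^ b)
    (hcond : Real.exp (2 * 1.01 * (ω * b) ^ 2 / lam) ≤ 1.01)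
    (g : ℕ → ℝ)
    (hg1 : g 1 = 1 / (1 + ω))
    (hg2 : g 2 = (1 / (1 + ω)) * (1 - (1 / (1 + ω)) ^ b))
    (hrec : ∀ i, 2 ≤ i →
      g (i + 1) = (ω / (1 + ω)) * (1 - (1 - g (i - 1) ^ b) ^ b)
          + (1 / (1 + ω)) * (1 - g i ^ b)) :
    ∀ i, 1 ≤ i → g i ≤ (1.01 : ℝ) ^ ((1 : ℝ) / b) / (1 + ω) := by
  set M : ℝ := (1.01 : ℝ) ^ ((1 : ℝ) / b) with hM
  have hb0 : (0 : ℝ) < b := by positivity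
  have hωb : Real.log 2 ≤ ω * b := by
    have hlog : Real.log 2 ≤ Real.log b := Real.log_le_log two_pos (by exact_mod_cast hb)
    rw [hω, div_mul_cancel₀ _ hb0.ne']
    nlinarith [Real.log_nonneg (by norm_num : (1 : ℝ) ≤ 2)]
  have hω0 : 0 < ω := pos_of_mul_pos_left ((Real.log_pos one_lt_two).trans_le hωb) hb0.le
  have hMb : M ^ b = 1.01 := by
    rw [hM, one_div, Real.rpow_inv_natCast_pow (by norm_num) (by omega)]
  have hM1 : M ≤ 1 + ω := by
    refine (pow_le_pow_iff_left₀ (by positivity) (by positivity) (by omega : b ≠ 0)).1 ?_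
    nlinarith [hMb, one_add_mul_le_pow (a := ω) (by linarith) b, Real.log_two_gt_d9]
  have hMstep : 1 + M ^ b * ω * b / (1 + ω) ^ b ≤ M := by
    rw [hMb]
    exact one_add_mul_div_pow_le_rpow (by norm_num) hω0 (by omega) (hlam ▸ hcond)
  have hg1M : g 1 ∈ Icc 0 (M / (1 + ω)) := by
    rw [hg1]
    exact ⟨by positivity, by gcongr; exact Real.one_le_rpow (by norm_num) (by positivity)⟩
  have hF : ∀ x ∈ Icc 0 (M / (1 + ω)), ∀ y ∈ Icc 0 (M / (1 + ω)),
      reconStep ω b x y ∈ Icc 0 (M / (1 + ω)) :=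
    fun x hx y hy => reconStep_mem_Icc hω0.le hM1 hMstep hx hy
  have hg2M : g 2 ∈ Icc 0 (M / (1 + ω)) := by
    have hg2F : g 2 = reconStep ω b 0 (g 1) := by
      simp [reconStep, hg2, hg1, zero_pow (by omega : b ≠ 0)]
    exact hg2F ▸ hF 0 ⟨le_rfl, by positivity⟩ _ hg1M
  exact fun i hi => (mem_of_two_step_rec hF hg1M hg2M hrec i hi).2
end

section
/- Let ζ_0, ζ_1, … be an inhomogeneous Markov chain on {0,1} with ζ_0 = 0, P(1→0) = 1, P(1→1) = 0, and at each step i, P(0→0) = p_i with |p_i − p| ≤ δ (so P(0→1) = 1−p_i ≤ q+δ where q = 1−p). Let N_h = #{1 ≤ i ≤ h : ζ_i = 0} and a > 0. Then E[a^{N_h}] ≤ Σ_{k=0}^{⌊h/2⌋} C(h−k,k)(p+δ)^{h−2k}(q+δ)^k a^{h−k} + Σ_{k=1}^{⌊(h+1)/2⌋} C(h−k,k−1)(p+δ)^{h−2k+1}(q+δ)^k a^{h−k}. -/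
open Finset

/-- Inhomogeneous one-step transition probability at time `i`: from state `1` go to `0`
with probability `1`; from state `0` stay at `0` with probability `pseq i` and move to
`1` with probability `1 - pseq i`. (`true` represents state `1`.) -/
def chainStepI (pseq : ℕ → ℝ) (i : ℕ) (prev next : Bool) : ℝ :=
  if prev then (if next then 0 else 1) else (if next then 1 - pseq i else pseq i)

/-- Probability of the trajectory `g 0, …, g h` of the inhomogeneous chain started
at `0`. -/
def trajProbI (pseq : ℕ → ℝ) (h : ℕ) (g : Fin (h + 1) → Bool) : ℝ :=
  (if g 0 = false then 1 else 0) *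
    ∏ i : Fin h, chainStepI pseq i (g i.castSucc) (g i.succ)

/-- `E[a^{N_h}]` for the inhomogeneous chain. -/
noncomputable def chainGenFunI (pseq : ℕ → ℝ) (a : ℝ) (h : ℕ) : ℝ :=
  ∑ g : Fin (h + 1) → Bool,
    trajProbI pseq h g * a ^ (univ.filter (fun i : Fin h => g i.succ = false)).card

-- weight as a product
def wt (a : ℝ) (h : ℕ) (g : Fin (h + 1) → Bool) : ℝ :=
  ∏ i : Fin h, (if g i.succ = false then a else 1)

lemma wt_eq (a : ℝ) (h : ℕ) (g : Fin (h + 1) → Bool) :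
    wt a h g = a ^ (univ.filter (fun i : Fin h => g i.succ = false)).card := by
  rw [wt, Finset.prod_ite, Finset.prod_const, Finset.prod_const_one, mul_one]

-- sum over snoc
lemma sum_snoc {h : ℕ} (f : (Fin (h + 2) → Bool) → ℝ) :
    ∑ g : Fin (h + 2) → Bool, f g =
      ∑ g : Fin (h + 1) → Bool, ∑ b : Bool, f (Fin.snoc g b) := by
  rw [← (Fin.snocEquiv (fun _ : Fin (h + 2) => Bool)).sum_comp f, Fintype.sum_prod_type,
    Finset.sum_comm]
  simp [Fin.snocEquiv]

lemma traj_snoc (pseq : ℕ → ℝ) (h : ℕ) (g : Fin (h + 1) → Bool) (b : Bool) :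
    trajProbI pseq (h + 1) (Fin.snoc g b) =
      trajProbI pseq h g * chainStepI pseq h (g (Fin.last h)) b := by
  have h0 : (Fin.snoc g b : Fin (h + 2) → Bool) 0 = g 0 := by
    show (Fin.snoc g b : Fin (h + 2) → Bool) (Fin.castSucc 0) = g 0
    rw [Fin.snoc_castSucc]
  simp only [trajProbI, Fin.prod_univ_castSucc, Fin.succ_castSucc, Fin.snoc_castSucc,
    Fin.succ_last, Fin.snoc_last, Fin.coe_castSucc, Fin.val_last, h0]
  ring

lemma wt_snoc (a : ℝ) (h : ℕ) (g : Fin (h + 1) → Bool) (b : Bool) :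
    wt a (h + 1) (Fin.snoc g b) = wt a h g * (if b = false then a else 1) := by
  rw [wt, wt, Fin.prod_univ_castSucc]
  have hlasts : (Fin.snoc g b : Fin (h+2) → Bool) ((Fin.last h).succ) = b := by
    have : (Fin.last h).succ = Fin.last (h + 1) := rfl
    rw [this, Fin.snoc_last]
  rw [hlasts]
  congr 1
  refine Finset.prod_congr rfl (fun i _ => ?_)
  have e2 : ((i.castSucc : Fin (h+1)).succ : Fin (h+2)) = (i.succ).castSucc := by
    ext; simp
  rw [e2, Fin.snoc_castSucc]

def Abound (P Q a : ℝ) (h : ℕ) : ℝ :=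
  ∑ k ∈ Finset.range (h / 2 + 1),
    ((h - k).choose k : ℝ) * P ^ (h - 2 * k) * Q ^ k * a ^ (h - k)

def Bbound (P Q a : ℝ) (h : ℕ) : ℝ :=
  ∑ k ∈ Finset.Icc 1 ((h + 1) / 2),
    ((h - k).choose (k - 1) : ℝ) * P ^ (h + 1 - 2 * k) * Q ^ k * a ^ (h - k)

lemma Abound_zero (P Q a : ℝ) : Abound P Q a 0 = 1 := by simp [Abound]

lemma Bbound_zero (P Q a : ℝ) : Bbound P Q a 0 = 0 := by simp [Bbound]

lemma Bbound_succ (P Q a : ℝ) (h : ℕ) :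
    Bbound P Q a (h + 1) = Q * Abound P Q a h := by
  rw [Bbound, Abound, Finset.mul_sum]
  rw [show (h + 1 + 1) / 2 = h / 2 + 1 by omega]
  rw [← Finset.Ico_add_one_right_eq_Icc, Finset.sum_Ico_eq_sum_range]
  rw [show h / 2 + 1 + 1 - 1 = h / 2 + 1 by omega]
  refine Finset.sum_congr rfl fun k hk => ?_
  have hk' : k ≤ h / 2 := by simpa using Nat.lt_succ_iff.mp (Finset.mem_range.mp hk)
  rw [show h + 1 - (1 + k) = h - k by omega, show 1 + k - 1 = k by omega,
    show h + 1 + 1 - 2 * (1 + k) = h - 2 * k by omega, show 1 + k = k + 1 by omega, pow_succ]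
  ring

lemma Abound_succ (P Q a : ℝ) (h : ℕ) :
    Abound P Q a (h + 1) = a * (P * Abound P Q a h + Bbound P Q a h) := by
  set M := (h + 1) / 2 with hM
  have hsplit : Finset.range (M + 1) = insert 0 (Finset.Icc 1 M) := by
    ext x; simp only [Finset.mem_range, Finset.mem_insert, Finset.mem_Icc]; omega
  have h0ni : 0 ∉ Finset.Icc 1 M := by simp
  have key : ∀ k ∈ Finset.Icc 1 M,
      ((h + 1 - k).choose k : ℝ) * P ^ (h + 1 - 2 * k) * Q ^ k * a ^ (h + 1 - k)
        = ((h - k).choose k : ℝ) * P ^ (h + 1 - 2 * k) * Q ^ k * a ^ (h + 1 - k)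
          + ((h - k).choose (k - 1) : ℝ) * P ^ (h + 1 - 2 * k) * Q ^ k * a ^ (h + 1 - k) := by
    intro k hk
    rw [Finset.mem_Icc] at hk
    have hkh : k ≤ h := by omega
    have hc := Nat.choose_succ_succ' (h - k) (k - 1)
    rw [show k - 1 + 1 = k by omega, show h - k + 1 = h + 1 - k by omega] at hc
    rw [hc]
    push_cast
    ring
  have step1 : Abound P Q a (h + 1)
      = (∑ k ∈ Finset.range (M + 1),
          ((h - k).choose k : ℝ) * P ^ (h + 1 - 2 * k) * Q ^ k * a ^ (h + 1 - k))
        + ∑ k ∈ Finset.Icc 1 M,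
            ((h - k).choose (k - 1) : ℝ) * P ^ (h + 1 - 2 * k) * Q ^ k * a ^ (h + 1 - k) := by
    rw [Abound, ← hM, hsplit, Finset.sum_insert h0ni, Finset.sum_insert h0ni,
      Finset.sum_congr rfl key, Finset.sum_add_distrib]
    simp [add_assoc]
  have step2 : (∑ k ∈ Finset.range (M + 1),
        ((h - k).choose k : ℝ) * P ^ (h + 1 - 2 * k) * Q ^ k * a ^ (h + 1 - k))
      = ∑ k ∈ Finset.range (h / 2 + 1),
          ((h - k).choose k : ℝ) * P ^ (h + 1 - 2 * k) * Q ^ k * a ^ (h + 1 - k) := by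
    rcases Nat.even_or_odd h with ⟨m, rfl⟩ | ⟨m, rfl⟩
    · rw [show M + 1 = (m + m) / 2 + 1 by omega]
    · rw [show M + 1 = ((2 * m + 1) / 2 + 1) + 1 by omega, Finset.sum_range_succ]
      rw [Nat.choose_eq_zero_of_lt
        (by omega : 2 * m + 1 - ((2 * m + 1) / 2 + 1) < (2 * m + 1) / 2 + 1)]
      simp
  have step3 : (∑ k ∈ Finset.range (h / 2 + 1),
        ((h - k).choose k : ℝ) * P ^ (h + 1 - 2 * k) * Q ^ k * a ^ (h + 1 - k))
      = a * (P * Abound P Q a h) := by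
    rw [Abound, Finset.mul_sum, Finset.mul_sum]
    refine Finset.sum_congr rfl fun k hk => ?_
    have hk' : k ≤ h / 2 := Nat.lt_succ_iff.mp (Finset.mem_range.mp hk)
    rw [show h + 1 - 2 * k = (h - 2 * k) + 1 by omega,
      show h + 1 - k = (h - k) + 1 by omega, pow_succ, pow_succ]
    ring
  have step4 : (∑ k ∈ Finset.Icc 1 M,
        ((h - k).choose (k - 1) : ℝ) * P ^ (h + 1 - 2 * k) * Q ^ k * a ^ (h + 1 - k))
      = a * Bbound P Q a h := by
    rw [Bbound, Finset.mul_sum, ← hM]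
    refine Finset.sum_congr rfl fun k hk => ?_
    rw [Finset.mem_Icc] at hk
    rw [show h + 1 - k = (h - k) + 1 by omega, pow_succ]
    ring
  rw [step1, step2, step3, step4]
  ring

noncomputable def Wsum (pseq : ℕ → ℝ) (a : ℝ) (h : ℕ) (c : Bool) : ℝ :=
  ∑ g : Fin (h + 1) → Bool,
    (if g (Fin.last h) = c then trajProbI pseq h g * wt a h g else 0)

lemma chainGenFunI_eq (pseq : ℕ → ℝ) (a : ℝ) (h : ℕ) :
    chainGenFunI pseq a h = Wsum pseq a h false + Wsum pseq a h true := by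
  rw [chainGenFunI, Wsum, Wsum, ← Finset.sum_add_distrib]
  refine Finset.sum_congr rfl fun g _ => ?_
  rw [← wt_eq]
  cases hgl : g (Fin.last h) <;> simp [hgl]

lemma step_nonneg (pseq : ℕ → ℝ) (h0 : ∀ i, 0 ≤ pseq i) (h1 : ∀ i, pseq i ≤ 1)
    (i : ℕ) (prev next : Bool) : 0 ≤ chainStepI pseq i prev next := by
  rw [chainStepI]
  have := h0 i; have := h1 i
  split_ifs <;> linarith

lemma traj_nonneg (pseq : ℕ → ℝ) (h0 : ∀ i, 0 ≤ pseq i) (h1 : ∀ i, pseq i ≤ 1)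
    (h : ℕ) (g : Fin (h + 1) → Bool) : 0 ≤ trajProbI pseq h g := by
  rw [trajProbI]
  refine mul_nonneg (by split_ifs <;> norm_num)
    (Finset.prod_nonneg fun i _ => step_nonneg pseq h0 h1 _ _ _)

lemma wt_nonneg (a : ℝ) (ha : 0 ≤ a) (h : ℕ) (g : Fin (h + 1) → Bool) :
    0 ≤ wt a h g :=
  Finset.prod_nonneg fun i _ => by split_ifs <;> norm_num [ha]

lemma Wsum_zero (pseq : ℕ → ℝ) (a : ℝ) (c : Bool) :
    Wsum pseq a 0 c = if c = false then 1 else 0 := by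
  rw [Wsum, ← Equiv.sum_comp (Equiv.funUnique (Fin 1) Bool).symm]
  rw [Fintype.sum_bool]
  cases c <;> simp [Equiv.funUnique, trajProbI, wt, Fin.last]

lemma Wsum_succ (pseq : ℕ → ℝ) (a : ℝ) (h : ℕ) (c : Bool) :
    Wsum pseq a (h + 1) c
      = ∑ g : Fin (h + 1) → Bool,
          trajProbI pseq h g * chainStepI pseq h (g (Fin.last h)) c
            * (wt a h g * (if c = false then a else 1)) := by
  rw [Wsum, sum_snoc]
  refine Finset.sum_congr rfl fun g _ => ?_
  rw [Fintype.sum_bool]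
  simp only [Fin.snoc_last, traj_snoc, wt_snoc]
  cases c <;> simp

lemma W_le (pseq : ℕ → ℝ) (P Q a : ℝ) (ha : 0 < a) (hP : 0 ≤ P) (hQ : 0 ≤ Q)
    (h0 : ∀ i, 0 ≤ pseq i) (h1 : ∀ i, pseq i ≤ 1)
    (hup : ∀ i, pseq i ≤ P) (hdn : ∀ i, 1 - pseq i ≤ Q) :
    ∀ h, Wsum pseq a h false ≤ Abound P Q a h ∧ Wsum pseq a h true ≤ Bbound P Q a h := by
  intro h
  induction h with
  | zero => simp [Wsum_zero, Abound_zero, Bbound_zero]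
  | succ h ih =>
    obtain ⟨IH0, IH1⟩ := ih
    have htw : ∀ g : Fin (h + 1) → Bool, 0 ≤ trajProbI pseq h g * wt a h g :=
      fun g => mul_nonneg (traj_nonneg pseq h0 h1 h g) (wt_nonneg a ha.le h g)
    constructor
    · calc Wsum pseq a (h + 1) false
          = ∑ g : Fin (h + 1) → Bool,
              trajProbI pseq h g * chainStepI pseq h (g (Fin.last h)) false
                * (wt a h g * a) := by rw [Wsum_succ]; simp
        _ ≤ ∑ g : Fin (h + 1) → Bool,
              (if g (Fin.last h) = false then P * (trajProbI pseq h g * wt a h g)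
                else trajProbI pseq h g * wt a h g) * a := by
            refine Finset.sum_le_sum fun g _ => ?_
            cases hb : g (Fin.last h)
            · norm_num [chainStepI]
              have := mul_le_mul_of_nonneg_right
                (mul_le_mul_of_nonneg_left (hup h) (htw g)) ha.le
              nlinarith [htw g, ha.le]
            · norm_num [chainStepI]
              apply le_of_eq; ring
        _ = (P * Wsum pseq a h false + Wsum pseq a h true) * a := by
            rw [Wsum, Wsum, Finset.mul_sum, ← Finset.sum_add_distrib, Finset.sum_mul]
            refine Finset.sum_congr rfl fun g _ => ?_
            cases hb : g (Fin.last h) <;> simp [hb]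
        _ ≤ (P * Abound P Q a h + Bbound P Q a h) * a := by
            have h2 := add_le_add (mul_le_mul_of_nonneg_left IH0 hP) IH1
            exact mul_le_mul_of_nonneg_right h2 ha.le
        _ = Abound P Q a (h + 1) := by rw [Abound_succ]; ring
    · calc Wsum pseq a (h + 1) true
          = ∑ g : Fin (h + 1) → Bool,
              trajProbI pseq h g * chainStepI pseq h (g (Fin.last h)) true
                * (wt a h g * 1) := by rw [Wsum_succ]; simp
        _ ≤ ∑ g : Fin (h + 1) → Bool,
              (if g (Fin.last h) = false then Q * (trajProbI pseq h g * wt a h g)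
                else 0) := by
            refine Finset.sum_le_sum fun g _ => ?_
            cases hb : g (Fin.last h)
            · norm_num [chainStepI]
              have := mul_le_mul_of_nonneg_left (hdn h) (htw g)
              nlinarith [htw g]
            · norm_num [chainStepI]
        _ = Q * Wsum pseq a h false := by
            rw [Wsum, Finset.mul_sum]
            refine Finset.sum_congr rfl fun g _ => ?_
            cases hb : g (Fin.last h) <;> simp [hb]
        _ ≤ Q * Abound P Q a h := mul_le_mul_of_nonneg_left IH0 hQ
        _ = Bbound P Q a (h + 1) := (Bbound_succ P Q a h).symm


/-- Inhomogeneous upper bound: if `|p_i − p| ≤ δ` for all steps, then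
`E[a^{N_h}] ≤ Σ_k C(h−k,k)(p+δ)^{h−2k}(q+δ)^k a^{h−k}
  + Σ_k C(h−k,k−1)(p+δ)^{h−2k+1}(q+δ)^k a^{h−k}`. -/
theorem stmt9 (p q δ a : ℝ) (hp0 : 0 ≤ p) (hp1 : p ≤ 1) (hq : q = 1 - p)
    (hδ : 0 ≤ δ) (ha : 0 < a) (pseq : ℕ → ℝ)
    (hpseq0 : ∀ i, 0 ≤ pseq i) (hpseq1 : ∀ i, pseq i ≤ 1)
    (hclose : ∀ i, |pseq i - p| ≤ δ) (h : ℕ) :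
    chainGenFunI pseq a h ≤
      (∑ k ∈ Finset.range (h / 2 + 1),
        ((h - k).choose k : ℝ) * (p + δ) ^ (h - 2 * k) * (q + δ) ^ k * a ^ (h - k)) +
      (∑ k ∈ Finset.Icc 1 ((h + 1) / 2),
        ((h - k).choose (k - 1) : ℝ) * (p + δ) ^ (h + 1 - 2 * k) * (q + δ) ^ k *
          a ^ (h - k)) := by
  have hup : ∀ i, pseq i ≤ p + δ := fun i => by
    have := (abs_le.mp (hclose i)).2; linarith
  have hdn : ∀ i, 1 - pseq i ≤ q + δ := fun i => by
    have := (abs_le.mp (hclose i)).1; rw [hq]; linarith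
  have key := W_le pseq (p + δ) (q + δ) a ha (by linarith) (by rw [hq]; linarith)
    hpseq0 hpseq1 hup hdn h
  have : chainGenFunI pseq a h ≤ Abound (p + δ) (q + δ) a h + Bbound (p + δ) (q + δ) a h := by
    rw [chainGenFunI_eq]; exact add_le_add key.1 key.2
  rw [Abound, Bbound] at this
  exact this
end

section
/- In the broadcast measure ν_h on the complete b-ary tree, condition on the spins (σ(u_1),…,σ(u_h)) along the path P from a fixed leaf û to the root. Then the events {R_σ(w) = 0}, as w ranges over all off-path children of path vertices, are mutually independent given the path spins; moreover if σ(u_i) = 0 then for each off-path child w of u_i, Pr[R_σ(w) = 0 | path spins] equals the probability that the bottom-up reconstruction rule outputs 0 on an independent broadcast tree of height i−1. Consequently, ν_h(A(σ)=1 and A(σ^û)=0) ≤ E_{σ∼ν_h}[ ∏_{i>0: σ(u_i)=0} g_{i−1}^{b−1} ], where g_j = Pr_{η∼ν_j}[A(η)=0] and σ^û flips σ at û. -/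
open Finset

/-- Vertices of the complete `b`-ary tree of height `h`: a vertex at depth `k` is a
path of `k` child-indices from the root. -/
def Vtx (b h : ℕ) : Type := Σ k : Fin (h + 1), (Fin (k : ℕ) → Fin b)

noncomputable instance (b h : ℕ) : Fintype (Vtx b h) := by unfold Vtx; infer_instance
instance (b h : ℕ) : DecidableEq (Vtx b h) := by unfold Vtx; infer_instance

/-- Depth of a vertex. -/
def Vtx.depth {b h : ℕ} (v : Vtx b h) : ℕ := (v.1 : ℕ)

/-- The root. -/
def treeRoot (b h : ℕ) : Vtx b h :=
  ⟨⟨0, Nat.succ_pos h⟩, fun i => i.elim0⟩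

/-- Parent of a vertex (the root is its own parent). -/
def Vtx.parent {b h : ℕ} (v : Vtx b h) : Vtx b h :=
  ⟨⟨(v.1 : ℕ) - 1, lt_of_le_of_lt (Nat.sub_le _ _) v.1.isLt⟩,
    fun i => v.2 ⟨(i : ℕ), lt_of_lt_of_le i.isLt (Nat.sub_le _ _)⟩⟩

/-- The `j`-th child of a non-leaf vertex. -/
def Vtx.child {b h : ℕ} (v : Vtx b h) (hlt : (v.1 : ℕ) < h) (j : Fin b) : Vtx b h :=
  ⟨⟨(v.1 : ℕ) + 1, by omega⟩,
    fun i => if hi : (i : ℕ) < (v.1 : ℕ) then v.2 ⟨(i : ℕ), hi⟩ else j⟩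

/-- The vertex at depth `d` on the all-`0` path from the root to a fixed leaf. -/
def pathVtx (b h : ℕ) (hb : 0 < b) (d : Fin (h + 1)) : Vtx b h :=
  ⟨d, fun _ => ⟨0, hb⟩⟩

/-- The bottom-up reconstruction rule: a leaf is labeled by its spin; an internal vertex
is labeled occupied iff all its children are labeled unoccupied. -/
def Rfun {b h : ℕ} (σ : Vtx b h → Bool) (v : Vtx b h) : Bool :=
  if hk : (v.1 : ℕ) = h then σ v
  else decide (∀ j : Fin b,
    Rfun σ (v.child (lt_of_le_of_ne (Nat.lt_succ_iff.mp v.1.isLt) hk) j) = false)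
termination_by h - (v.1 : ℕ)
decreasing_by
  all_goals
    have hv := v.1.isLt
    show h - ((v.1 : ℕ) + 1) < h - (v.1 : ℕ)
    omega

/-- The broadcast measure `ν_h` on the complete `b`-ary tree. -/
noncomputable def bcast (b h : ℕ) (ω : ℝ) (σ : Vtx b h → Bool) : ℝ :=
  ∏ v : Vtx b h,
    if (v.1 : ℕ) = 0 then (if σ v then ω / (1 + ω) else 1 - ω / (1 + ω))
    else if σ v.parent then (if σ v then 0 else 1)
    else (if σ v then ω / (1 + ω) else 1 - ω / (1 + ω))

/-- `g_j = Pr_{η∼ν_j}[A(η)=0]`: the probability that the bottom-up reconstruction rule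
outputs `0` at the root of an independent broadcast tree of height `j`. -/
noncomputable def gval (b j : ℕ) (ω : ℝ) : ℝ :=
  ∑ η : Vtx b j → Bool,
    bcast b j ω η * (if Rfun η (treeRoot b j) = false then 1 else 0)

/-- The `j`-th child of the path vertex at depth `d` (off the path when `j ≠ 0`). -/
def offChild (b h : ℕ) (hb : 0 < b) (d : Fin h) (j : Fin b) : Vtx b h :=
  (pathVtx b h hb d.castSucc).child (by show ((d.castSucc : Fin (h+1)) : ℕ) < h; simp) j

/-!
Splitting a tree of height `h + 1` into its root and `b` subtrees of height `h`, the broadcast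
measure started from a parent state `p` factors as the transition weight of the root times
independent broadcast measures on the subtrees, all started from the root spin, and the rule
`A` at the root is computed from its values at the subtree roots. Induction along the path from
the root to `û` then shows that, given the path spins, the rule values at the off-path children
are independent, the one hanging off the path vertex at depth `d` being distributed as `A` on a
fresh tree of height `h - d - 1` started from the spin of that vertex.

Flipping `û` changes `A` only if the flip propagates through every path vertex, which forces
`R = 0` at every off-path child. So the flip indicator is bounded by the product of the
indicators `R(w) = 0` over the off-path children of unoccupied path vertices, and conditioning
on the path spins turns that product into `∏ g^(b-1)`.
-/

theorem Fin.cons_eq_iff {n : ℕ} {α : Type*} (x : α) (y : Fin n → α) (z : Fin (n + 1) → α) :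
    Fin.cons x y = z ↔ x = z 0 ∧ y = Fin.tail z := by
  rw [← Fin.cons_self_tail z, Fin.cons_inj, Fin.cons_zero, Fin.tail_cons]

theorem Fintype.sum_pi_mul_prod_erase {ι X R : Type*} [Fintype ι] [DecidableEq ι] [Fintype X]
    [CommSemiring R] (i₀ : ι) (A : X → R) (B : ι → X → R) :
    ∑ η : ι → X, A (η i₀) * ∏ i ∈ univ.erase i₀, B i (η i) =
      (∑ x, A x) * ∏ i ∈ univ.erase i₀, ∑ x, B i x := by
  have hsplit (g : ι → R) : ∏ i, g i = g i₀ * ∏ i ∈ univ.erase i₀, g i :=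
    (mul_prod_erase _ _ (mem_univ i₀)).symm
  let T (i : ι) (x : X) : R := if i = i₀ then A x else B i x
  calc ∑ η : ι → X, A (η i₀) * ∏ i ∈ univ.erase i₀, B i (η i)
      = ∑ η : ι → X, ∏ i, T i (η i) := by
        refine Finset.sum_congr rfl fun η _ => ?_
        rw [hsplit]
        exact congrArg₂ _ (if_pos rfl).symm
          (Finset.prod_congr rfl fun i hi => (if_neg (ne_of_mem_erase hi)).symm)
    _ = ∏ i, ∑ x, T i x := (Fintype.prod_sum T).symm
    _ = (∑ x, A x) * ∏ i ∈ univ.erase i₀, ∑ x, B i x := by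
        rw [hsplit]
        exact congrArg₂ _ (Finset.sum_congr rfl fun x _ => if_pos rfl)
          (Finset.prod_congr rfl fun i hi =>
            Finset.sum_congr rfl fun x _ => if_neg (ne_of_mem_erase hi))

theorem Finset.prod_prod_ite_and_eq {ι κ M : Type*} [CommMonoid M] [Fintype ι] [DecidableEq ι]
    [DecidableEq κ] {t : Finset κ} (i : ι) {k : κ} (hk : k ∈ t) (f : ι → κ → M) :
    ∏ x, ∏ y ∈ t, (if x = i ∧ y = k then f x y else 1) = f i k := by
  simp [ite_and, hk]

@[simp] theorem treeRoot_fst {b h : ℕ} : ((treeRoot b h).1 : ℕ) = 0 := rfl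

namespace Vtx

variable {b h : ℕ}

theorem ext {u v : Vtx b h} (hd : (u.1 : ℕ) = v.1)
    (hs : ∀ (i : ℕ) (hi : i < (u.1 : ℕ)), u.2 ⟨i, hi⟩ = v.2 ⟨i, hd ▸ hi⟩) : u = v := by
  obtain ⟨k, f⟩ := u
  obtain ⟨k', g⟩ := v
  obtain rfl : k = k' := Fin.ext hd
  exact congrArg _ (funext fun i => hs i i.2)

theorem eq_treeRoot {v : Vtx b h} (hv : (v.1 : ℕ) = 0) : v = treeRoot b h :=
  ext hv fun _ hi => absurd hi (by omega)

/-- The copy of `v` in the `j`-th principal subtree. -/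
def cons (j : Fin b) (v : Vtx b h) : Vtx b (h + 1) :=
  ⟨⟨v.1 + 1, by omega⟩, Fin.cons j v.2⟩

@[simp] theorem cons_fst (j : Fin b) (v : Vtx b h) : ((cons j v).1 : ℕ) = v.1 + 1 := rfl

theorem cons_snd_succ (j : Fin b) (v : Vtx b h) (i : ℕ) (hi : i + 1 < ((cons j v).1 : ℕ)) :
    (cons j v).2 ⟨i + 1, hi⟩ = v.2 ⟨i, by simpa using hi⟩ := rfl

theorem cons_ne_treeRoot (j : Fin b) (v : Vtx b h) : cons j v ≠ treeRoot b (h + 1) :=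
  fun H => Nat.succ_ne_zero _ (congrArg (fun w : Vtx b (h + 1) => (w.1 : ℕ)) H)

theorem cons_inj {j j' : Fin b} {u u' : Vtx b h} : cons j u = cons j' u' ↔ j = j' ∧ u = u' := by
  refine ⟨fun H => ?_, fun ⟨hj, hu⟩ => hj ▸ hu ▸ rfl⟩
  obtain ⟨⟨k, hk⟩, f⟩ := u
  obtain ⟨⟨k', hk'⟩, f'⟩ := u'
  obtain rfl : k = k' := by simpa [cons] using congrArg (fun w : Vtx b (h + 1) => (w.1 : ℕ)) H
  obtain ⟨hj, rfl⟩ := Fin.cons_inj.mp (eq_of_heq (Sigma.mk.inj H).2)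
  exact ⟨hj, rfl⟩

theorem eq_treeRoot_or_exists_cons (v : Vtx b (h + 1)) :
    v = treeRoot b (h + 1) ∨ ∃ j u, cons j u = v := by
  obtain ⟨⟨k, hk⟩, f⟩ := v
  cases k with
  | zero => exact Or.inl (eq_treeRoot rfl)
  | succ k =>
    refine Or.inr ⟨f 0, ⟨⟨k, by omega⟩, Fin.tail f⟩, ?_⟩
    unfold cons
    rw [Fin.cons_self_tail]

noncomputable def consEquiv (b h : ℕ) : Unit ⊕ Fin b × Vtx b h ≃ Vtx b (h + 1) :=
  Equiv.ofBijective (Sum.elim (fun _ => treeRoot b (h + 1)) fun p => cons p.1 p.2) <| by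
    refine ⟨?_, fun v => ?_⟩
    · rintro (_ | ⟨j, u⟩) (_ | ⟨j', u'⟩) H
      · rfl
      · exact absurd H.symm (cons_ne_treeRoot j' u')
      · exact absurd H (cons_ne_treeRoot j u)
      · obtain ⟨rfl, rfl⟩ := cons_inj.mp H; rfl
    · obtain rfl | ⟨j, u, rfl⟩ := eq_treeRoot_or_exists_cons v
      exacts [⟨Sum.inl (), rfl⟩, ⟨Sum.inr (j, u), rfl⟩]

theorem prod_succ {M : Type*} [CommMonoid M] (f : Vtx b (h + 1) → M) :
    ∏ v, f v = f (treeRoot b (h + 1)) * ∏ j : Fin b, ∏ v : Vtx b h, f (cons j v) := by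
  rw [← (consEquiv b h).prod_comp, Fintype.prod_sum_type, Fintype.prod_prod_type,
    Fintype.prod_unique]
  rfl

theorem child_cons (j j' : Fin b) (v : Vtx b h) (hv : (v.1 : ℕ) < h)
    (hv' : ((cons j v).1 : ℕ) < h + 1) :
    (cons j v).child hv' j' = cons j (v.child hv j') := by
  refine ext rfl fun i hi => ?_
  cases i with
  | zero => rfl
  | succ i =>
    rw [cons_snd_succ]
    by_cases hc : i < v.1
    · have h1 : i + 1 < ((cons j v).1 : ℕ) := by simpa using hc
      simp only [Vtx.child, h1, hc, dite_true]
      rfl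
    · have h1 : ¬ i + 1 < ((cons j v).1 : ℕ) := by simpa using hc
      simp only [Vtx.child, h1, hc, dite_false]

theorem child_congr {u v : Vtx b h} (H : u = v) (hu : (u.1 : ℕ) < h) (hv : (v.1 : ℕ) < h)
    (j : Fin b) : u.child hu j = v.child hv j := by
  subst H; rfl

theorem treeRoot_child (j : Fin b) (hr : ((treeRoot b (h + 1)).1 : ℕ) < h + 1) :
    (treeRoot b (h + 1)).child hr j = cons j (treeRoot b h) :=
  ext rfl fun i hi => by
    obtain rfl : i = 0 := by simp [Vtx.child, treeRoot] at hi; omega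
    rfl

theorem parent_cons_of_eq_zero (j : Fin b) {v : Vtx b h} (hv : (v.1 : ℕ) = 0) :
    (cons j v).parent = treeRoot b (h + 1) :=
  eq_treeRoot (by simp [Vtx.parent, hv])

theorem parent_cons (j : Fin b) {v : Vtx b h} (hv : (v.1 : ℕ) ≠ 0) :
    (cons j v).parent = cons j v.parent := by
  refine ext (show (v.1 : ℕ) + 1 - 1 = v.1 - 1 + 1 by omega) fun i hi => ?_
  cases i <;> rfl

end Vtx

section PathVertices

variable {b h : ℕ} (hb : 0 < b)

theorem pathVtx_zero : pathVtx b h hb 0 = treeRoot b h :=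
  Vtx.eq_treeRoot rfl

theorem pathVtx_succ (e : Fin (h + 1)) :
    pathVtx b (h + 1) hb e.succ = Vtx.cons ⟨0, hb⟩ (pathVtx b h hb e) :=
  Vtx.ext rfl fun i _ => by cases i <;> rfl

theorem pathVtx_last_succ :
    pathVtx b (h + 1) hb (Fin.last (h + 1)) = Vtx.cons ⟨0, hb⟩ (pathVtx b h hb (Fin.last h)) := by
  rw [← Fin.succ_last, pathVtx_succ]

theorem offChild_zero (j : Fin b) : offChild b (h + 1) hb 0 j = Vtx.cons j (treeRoot b h) := by
  rw [offChild, ← Vtx.treeRoot_child j (by simp [treeRoot])]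
  rfl

theorem offChild_succ (d : Fin h) (j : Fin b) :
    offChild b (h + 1) hb d.succ j = Vtx.cons ⟨0, hb⟩ (offChild b h hb d j) := by
  rw [offChild, offChild, ← Vtx.child_cons ⟨0, hb⟩ j (pathVtx b h hb d.castSucc) _
    (by show (d : ℕ) + 1 < h + 1; omega)]
  exact Vtx.child_congr (by rw [← Fin.succ_castSucc, pathVtx_succ]) _ _ _

end PathVertices

section Rule

variable {b h : ℕ}

theorem Rfun_of_depth_eq (σ : Vtx b h → Bool) {v : Vtx b h} (hv : (v.1 : ℕ) = h) :
    Rfun σ v = σ v := by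
  rw [Rfun, dif_pos hv]

theorem Rfun_of_depth_lt (σ : Vtx b h → Bool) {v : Vtx b h} (hv : (v.1 : ℕ) < h) :
    Rfun σ v = decide (∀ j, Rfun σ (v.child hv j) = false) := by
  rw [Rfun, dif_neg hv.ne]

theorem Rfun_cons (σ : Vtx b (h + 1) → Bool) (j : Fin b) (v : Vtx b h) :
    Rfun σ (Vtx.cons j v) = Rfun (σ ∘ Vtx.cons j) v := by
  by_cases hv : (v.1 : ℕ) = h
  · rw [Rfun_of_depth_eq _ hv, Rfun_of_depth_eq _ (by simp [hv]), Function.comp_apply]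
  · have hlt : (v.1 : ℕ) < h := by omega
    rw [Rfun_of_depth_lt _ hlt, Rfun_of_depth_lt _ (by simpa using hlt)]
    simp only [Vtx.child_cons _ _ _ hlt, Rfun_cons σ j (v.child hlt _)]
termination_by h - v.1
decreasing_by show h - ((v.1 : ℕ) + 1) < h - v.1; omega

theorem Rfun_treeRoot_succ (σ : Vtx b (h + 1) → Bool) :
    Rfun σ (treeRoot b (h + 1)) =
      decide (∀ j, Rfun (σ ∘ Vtx.cons j) (treeRoot b h) = false) := by
  rw [Rfun_of_depth_lt _ (by rw [treeRoot_fst]; omega), decide_eq_decide]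
  refine forall_congr' fun j => ?_
  rw [Vtx.treeRoot_child, Rfun_cons]

end Rule

section Config

variable {b h : ℕ} {M : Type*} [AddCommMonoid M]

instance : Unique (Vtx b 0) where
  default := treeRoot b 0
  uniq _ := Vtx.eq_treeRoot (by omega)

theorem sum_config_zero (f : Bool → M) :
    ∑ σ : Vtx b 0 → Bool, f (σ (treeRoot b 0)) = ∑ x, f x :=
  Fintype.sum_equiv (Equiv.funUnique (Vtx b 0) Bool) _ _ fun _ => rfl

theorem sum_config_succ (f : Bool → (Fin b → Vtx b h → Bool) → M) :
    ∑ σ : Vtx b (h + 1) → Bool, f (σ (treeRoot b (h + 1))) (fun j => σ ∘ Vtx.cons j) =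
      ∑ s, ∑ η, f s η := by
  rw [← Fintype.sum_prod_type']
  exact Fintype.sum_equiv
    (((Vtx.consEquiv b h).arrowCongr (Equiv.refl Bool)).symm.trans <|
      (Equiv.sumArrowEquivProdArrow _ _ _).trans <|
        (Equiv.funUnique Unit Bool).prodCongr (Equiv.curry _ _ _)) _ _ fun _ => rfl

end Config

section Broadcast

variable {b h : ℕ} {ω : ℝ}

/-- `transWeight ω p x` is the probability of spin `x` at a vertex whose parent has spin `p`. -/
noncomputable def transWeight (ω : ℝ) (p x : Bool) : ℝ :=
  if p then (if x then 0 else 1) else (if x then ω / (1 + ω) else 1 - ω / (1 + ω))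

/-- The broadcast measure on a tree whose root hangs below a virtual parent in state `p`. -/
noncomputable def bcastFrom (b h : ℕ) (ω : ℝ) (p : Bool) (σ : Vtx b h → Bool) : ℝ :=
  ∏ v : Vtx b h,
    if (v.1 : ℕ) = 0 then transWeight ω p (σ v) else transWeight ω (σ v.parent) (σ v)

theorem bcast_eq_bcastFrom (σ : Vtx b h → Bool) : bcast b h ω σ = bcastFrom b h ω false σ :=
  prod_congr rfl fun v _ => by by_cases hv : (v.1 : ℕ) = 0 <;> simp [transWeight, hv]

theorem transWeight_nonneg (hω : 0 ≤ ω) (p x : Bool) : 0 ≤ transWeight ω p x := by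
  have hq : ω / (1 + ω) ≤ 1 := (div_le_one (by linarith)).mpr (by linarith)
  have hq' : 0 ≤ ω / (1 + ω) := by positivity
  cases p <;> cases x <;> simp [transWeight] <;> linarith

theorem sum_transWeight (ω : ℝ) (p : Bool) : ∑ x, transWeight ω p x = 1 := by
  cases p <;> simp [transWeight]

theorem bcastFrom_nonneg (hω : 0 ≤ ω) (p : Bool) (σ : Vtx b h → Bool) :
    0 ≤ bcastFrom b h ω p σ :=
  prod_nonneg fun v _ => by split_ifs <;> exact transWeight_nonneg hω _ _

theorem bcastFrom_zero (p : Bool) (σ : Vtx b 0 → Bool) :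
    bcastFrom b 0 ω p σ = transWeight ω p (σ (treeRoot b 0)) := by
  rw [bcastFrom, Fintype.prod_unique]
  exact if_pos rfl

theorem bcastFrom_succ (p : Bool) (σ : Vtx b (h + 1) → Bool) :
    bcastFrom b (h + 1) ω p σ = transWeight ω p (σ (treeRoot b (h + 1))) *
      ∏ j, bcastFrom b h ω (σ (treeRoot b (h + 1))) (σ ∘ Vtx.cons j) := by
  rw [bcastFrom, Vtx.prod_succ, if_pos treeRoot_fst]
  refine congrArg _ (prod_congr rfl fun j _ => prod_congr rfl fun v _ => ?_)
  rw [if_neg (by simp)]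
  by_cases hv : (v.1 : ℕ) = 0
  · rw [if_pos hv, Vtx.parent_cons_of_eq_zero j hv, Function.comp_apply]
  · rw [if_neg hv, Vtx.parent_cons j hv, Function.comp_apply, Function.comp_apply]

theorem sum_bcastFrom (ω : ℝ) (p : Bool) : ∑ σ : Vtx b h → Bool, bcastFrom b h ω p σ = 1 := by
  induction h generalizing p with
  | zero =>
    simp only [bcastFrom_zero]
    exact (sum_config_zero (transWeight ω p)).trans (sum_transWeight ω p)
  | succ h ih =>
    simp only [bcastFrom_succ]
    refine (sum_config_succ fun s η => transWeight ω p s * ∏ j, bcastFrom b h ω s (η j)).trans ?_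
    simp only [← mul_sum, ← Fintype.prod_sum, ih, prod_const_one, mul_one, sum_transWeight]

noncomputable def ruleExpect (b m : ℕ) (ω : ℝ) (p : Bool) (F : Bool → ℝ) : ℝ :=
  ∑ η : Vtx b m → Bool, bcastFrom b m ω p η * F (Rfun η (treeRoot b m))

theorem ruleExpect_one (m : ℕ) (ω : ℝ) (p : Bool) : ruleExpect b m ω p (fun _ => 1) = 1 := by
  simp only [ruleExpect, mul_one, sum_bcastFrom]

theorem ruleExpect_ite (m : ℕ) (ω : ℝ) (p : Bool) (c : Prop) [Decidable c] (F : Bool → ℝ) :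
    ruleExpect b m ω p (fun r => if c then F r else 1) =
      if c then ruleExpect b m ω p F else 1 := by
  split_ifs
  · rfl
  · exact ruleExpect_one m ω p

theorem ruleExpect_false_eq_gval (m : ℕ) (ω : ℝ) :
    ruleExpect b m ω false (fun r => if r = false then 1 else 0) = gval b m ω := by
  simp only [ruleExpect, gval, bcast_eq_bcastFrom]

end Broadcast

section Path

variable {b h : ℕ} (hb : 0 < b)

def pathSpins (σ : Vtx b h → Bool) : Fin (h + 1) → Bool := fun e => σ (pathVtx b h hb e)

theorem pathSpins_zero (σ : Vtx b 0 → Bool) :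
    pathSpins hb σ = fun _ => σ (treeRoot b 0) :=
  funext fun e => by rw [Fin.fin_one_eq_zero e, pathSpins, pathVtx_zero]

theorem pathSpins_succ (σ : Vtx b (h + 1) → Bool) :
    pathSpins hb σ = Fin.cons (σ (treeRoot b (h + 1))) (pathSpins hb (σ ∘ Vtx.cons ⟨0, hb⟩)) := by
  funext e
  refine Fin.cases ?_ (fun e => ?_) e
  · rw [Fin.cons_zero, pathSpins, pathVtx_zero]
  · rw [Fin.cons_succ, pathSpins, pathSpins, pathVtx_succ, Function.comp_apply]

/-- The marginal law of the path spins. -/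
noncomputable def pathWeight (ω : ℝ) : (h : ℕ) → Bool → (Fin (h + 1) → Bool) → ℝ
  | 0, p, z => transWeight ω p (z 0)
  | h + 1, p, z => transWeight ω p (z 0) * pathWeight ω h (z 0) (Fin.tail z)

def offPathProd (F : Fin h → Fin b → Bool → ℝ) (σ : Vtx b h → Bool) : ℝ :=
  ∏ d, ∏ j ∈ univ.erase ⟨0, hb⟩, F d j (Rfun σ (offChild b h hb d j))

theorem offPathProd_zero (F : Fin 0 → Fin b → Bool → ℝ) (σ : Vtx b 0 → Bool) :
    offPathProd hb F σ = 1 :=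
  prod_of_isEmpty _

theorem offPathProd_succ (F : Fin (h + 1) → Fin b → Bool → ℝ) (σ : Vtx b (h + 1) → Bool) :
    offPathProd hb F σ =
      (∏ j ∈ univ.erase ⟨0, hb⟩, F 0 j (Rfun (σ ∘ Vtx.cons j) (treeRoot b h))) *
        offPathProd hb (fun d => F d.succ) (σ ∘ Vtx.cons ⟨0, hb⟩) := by
  simp only [offPathProd, Fin.prod_univ_succ, offChild_zero, offChild_succ, Rfun_cons]

end Path

section Markov

variable {b h : ℕ} (hb : 0 < b)

/-- Given the path spins, the values of the rule on the off-path children are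
independent, each distributed as the rule on a fresh broadcast tree started from the spin
of its path parent. -/
theorem sum_fiber_bcastFrom_mul_offPathProd (ω : ℝ) (p : Bool) (z : Fin (h + 1) → Bool)
    (F : Fin h → Fin b → Bool → ℝ) :
    ∑ σ : Vtx b h → Bool,
        (if pathSpins hb σ = z then bcastFrom b h ω p σ * offPathProd hb F σ else 0) =
      pathWeight ω h p z *
        ∏ d : Fin h, ∏ j ∈ univ.erase ⟨0, hb⟩,
          ruleExpect b (h - d - 1) ω (z d.castSucc) (F d j) := by
  induction h generalizing p with
  | zero =>
    simp only [pathSpins_zero, offPathProd_zero, bcastFrom_zero, mul_one, Finset.univ_eq_empty,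
      prod_empty]
    refine (sum_config_zero fun x => if (fun _ => x) = z then transWeight ω p x else 0).trans ?_
    simp [funext_iff, Fin.forall_fin_one, pathWeight]
  | succ h ih =>
    let A (x : Vtx b h → Bool) : ℝ := if pathSpins hb x = Fin.tail z
      then bcastFrom b h ω (z 0) x * offPathProd hb (fun d => F d.succ) x else 0
    let B (j : Fin b) (x : Vtx b h → Bool) : ℝ :=
      bcastFrom b h ω (z 0) x * F 0 j (Rfun x (treeRoot b h))
    have hσ (σ : Vtx b (h + 1) → Bool) :
        (if pathSpins hb σ = z then bcastFrom b (h + 1) ω p σ * offPathProd hb F σ else 0) =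
          if σ (treeRoot b (h + 1)) = z 0 then transWeight ω p (z 0) *
            (A (σ ∘ Vtx.cons ⟨0, hb⟩) * ∏ j ∈ univ.erase ⟨0, hb⟩, B j (σ ∘ Vtx.cons j))
          else 0 := by
      rw [bcastFrom_succ, offPathProd_succ]
      simp only [pathSpins_succ, Fin.cons_eq_iff]
      by_cases hs : σ (treeRoot b (h + 1)) = z 0
      · simp only [hs, true_and, if_true, A, B]
        split_ifs
        · rw [← mul_prod_erase univ _ (mem_univ ⟨0, hb⟩), prod_mul_distrib]
          ring
        · simp
      · simp [hs]
    calc _ = ∑ s, ∑ η : Fin b → Vtx b h → Bool, if s = z 0 then transWeight ω p (z 0) *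
            (A (η ⟨0, hb⟩) * ∏ j ∈ univ.erase ⟨0, hb⟩, B j (η j)) else 0 :=
          (sum_congr rfl fun σ _ => hσ σ).trans (sum_config_succ fun s η =>
            if s = z 0 then transWeight ω p (z 0) *
              (A (η ⟨0, hb⟩) * ∏ j ∈ univ.erase ⟨0, hb⟩, B j (η j)) else 0)
      _ = transWeight ω p (z 0) * ((∑ x, A x) * ∏ j ∈ univ.erase ⟨0, hb⟩, ∑ x, B j x) := by
          simp only [sum_ite_irrel, sum_const_zero, Fintype.sum_ite_eq', ← mul_sum,
            Fintype.sum_pi_mul_prod_erase]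
      _ = _ := by
          have hB (j : Fin b) : ∑ x, B j x = ruleExpect b h ω (z 0) (F 0 j) := rfl
          rw [ih, pathWeight, Fin.prod_univ_succ]
          simp only [hB, Fin.tail, Fin.succ_castSucc, Fin.val_zero, Fin.val_succ, Fin.castSucc_zero,
            Nat.sub_zero, Nat.add_sub_cancel, Nat.add_sub_add_right]
          ring

end Markov

section Conditioning

variable {b h : ℕ} (hb : 0 < b) (ω : ℝ)

theorem sum_fiber_bcast_eq_pathWeight (z : Fin (h + 1) → Bool) :
    ∑ σ : Vtx b h → Bool, (if pathSpins hb σ = z then bcast b h ω σ else 0) =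
      pathWeight ω h false z := by
  have H := sum_fiber_bcastFrom_mul_offPathProd hb ω false z fun _ _ _ => 1
  simp only [offPathProd, prod_const_one, mul_one, ruleExpect_one] at H
  simpa only [bcast_eq_bcastFrom] using H

theorem sum_fiber_offChild_Rfun_eq_false (z : Fin (h + 1) → Bool) (d : Fin h) {j : Fin b}
    (hj : j ≠ ⟨0, hb⟩) (hz : z d.castSucc = false) :
    ∑ σ : Vtx b h → Bool,
        (if pathSpins hb σ = z ∧ Rfun σ (offChild b h hb d j) = false then bcast b h ω σ else 0) =
      (∑ σ : Vtx b h → Bool, if pathSpins hb σ = z then bcast b h ω σ else 0) *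
        gval b (h - d - 1) ω := by
  let F (d' : Fin h) (j' : Fin b) (r : Bool) : ℝ :=
    if d' = d ∧ j' = j then (if r = false then 1 else 0) else 1
  have hj' : j ∈ univ.erase ⟨0, hb⟩ := mem_erase.mpr ⟨hj, mem_univ j⟩
  have H := sum_fiber_bcastFrom_mul_offPathProd hb ω false z F
  simp only [F, ruleExpect_ite, offPathProd, Finset.prod_prod_ite_and_eq d hj'] at H
  rw [hz, ruleExpect_false_eq_gval] at H
  rw [sum_fiber_bcast_eq_pathWeight, ← H]
  refine sum_congr rfl fun σ _ => ?_
  by_cases hσ : pathSpins hb σ = z <;> by_cases hR : Rfun σ (offChild b h hb d j) = false <;>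
    simp [hσ, hR, bcast_eq_bcastFrom]

theorem sum_eq_sum_fiber_pathSpins (f : (Vtx b h → Bool) → ℝ) :
    ∑ σ, f σ = ∑ z, ∑ σ, if pathSpins hb σ = z then f σ else 0 := by
  rw [sum_comm]
  simp

theorem sum_bcast_mul_offPathProd_pathSpins
    (F : (Fin (h + 1) → Bool) → Fin h → Fin b → Bool → ℝ) :
    ∑ σ, bcast b h ω σ * offPathProd hb (F (pathSpins hb σ)) σ =
      ∑ σ, bcast b h ω σ * ∏ d : Fin h, ∏ j ∈ univ.erase ⟨0, hb⟩,
        ruleExpect b (h - d - 1) ω (pathSpins hb σ d.castSucc) (F (pathSpins hb σ) d j) := by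
  let E (z : Fin (h + 1) → Bool) : ℝ :=
    ∏ d : Fin h, ∏ j ∈ univ.erase ⟨0, hb⟩, ruleExpect b (h - d - 1) ω (z d.castSucc) (F z d j)
  rw [sum_eq_sum_fiber_pathSpins hb, sum_eq_sum_fiber_pathSpins hb (fun σ => bcast b h ω σ * E _)]
  refine sum_congr rfl fun z _ => ?_
  calc _ = ∑ σ, if pathSpins hb σ = z then bcastFrom b h ω false σ * offPathProd hb (F z) σ
          else 0 :=
        sum_congr rfl fun σ _ => by split_ifs with hσ <;> simp only [hσ, bcast_eq_bcastFrom]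
    _ = (∑ σ, if pathSpins hb σ = z then bcast b h ω σ else 0) * E z := by
        rw [sum_fiber_bcastFrom_mul_offPathProd, sum_fiber_bcast_eq_pathWeight]
    _ = _ := by
        rw [sum_mul]
        exact sum_congr rfl fun σ _ => by split_ifs with hσ <;> simp only [hσ, zero_mul]

end Conditioning

section Flip

variable {b h : ℕ} (hb : 0 < b)

theorem Rfun_offChild_eq_false_of_Rfun_ne {σ σ' : Vtx b h → Bool}
    (hσ : ∀ v ≠ pathVtx b h hb (Fin.last h), σ v = σ' v)
    (hne : Rfun σ (treeRoot b h) ≠ Rfun σ' (treeRoot b h)) (d : Fin h) {j : Fin b}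
    (hj : j ≠ ⟨0, hb⟩) : Rfun σ (offChild b h hb d j) = false := by
  induction h with
  | zero => exact d.elim0
  | succ h ih =>
    have hsub (j : Fin b) (hj : j ≠ ⟨0, hb⟩) : σ ∘ Vtx.cons j = σ' ∘ Vtx.cons j :=
      funext fun u => hσ _ fun H => hj (Vtx.cons_inj.mp (H.trans (pathVtx_last_succ hb))).1
    -- an off-path subtree with value `true` would force `A = false` for both `σ` and `σ'`
    have hoff (j : Fin b) (hj : j ≠ ⟨0, hb⟩) : Rfun (σ ∘ Vtx.cons j) (treeRoot b h) = false := by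
      by_contra H
      apply hne
      rw [Rfun_treeRoot_succ, Rfun_treeRoot_succ,
        decide_eq_false fun hall => H (hall j),
        decide_eq_false fun hall => H (hsub j hj ▸ hall j)]
    have hpath : Rfun (σ ∘ Vtx.cons ⟨0, hb⟩) (treeRoot b h) ≠
        Rfun (σ' ∘ Vtx.cons ⟨0, hb⟩) (treeRoot b h) := by
      intro H
      apply hne
      rw [Rfun_treeRoot_succ, Rfun_treeRoot_succ, decide_eq_decide]
      refine forall_congr' fun j => ?_
      by_cases hj : j = ⟨0, hb⟩
      · rw [hj, H]
      · rw [hsub j hj]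
    rcases Fin.eq_zero_or_eq_succ d with rfl | ⟨d, rfl⟩
    · rw [offChild_zero, Rfun_cons]
      exact hoff j hj
    · rw [offChild_succ, Rfun_cons]
      refine ih (fun u hu => hσ _ fun H => hu ?_) hpath d
      exact (Vtx.cons_inj.mp (H.trans (pathVtx_last_succ hb))).2

theorem indicator_flip_le_offPathProd (σ : Vtx b h → Bool) :
    (if Rfun σ (treeRoot b h) = true ∧
        Rfun (Function.update σ (pathVtx b h hb (Fin.last h)) (!σ (pathVtx b h hb (Fin.last h))))
          (treeRoot b h) = false then (1 : ℝ) else 0) ≤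
      offPathProd hb (fun d _ r => if σ (pathVtx b h hb d.castSucc) = false
        then (if r = false then 1 else 0) else 1) σ := by
  split_ifs with hflip
  · refine (prod_eq_one fun d _ => prod_eq_one fun j hj => ?_).ge
    rw [Rfun_offChild_eq_false_of_Rfun_ne hb (fun v hv => (Function.update_of_ne hv _ _).symm)
      (by rw [hflip.1, hflip.2]; decide) d (ne_of_mem_erase hj)]
    simp
  · exact prod_nonneg fun d _ => prod_nonneg fun j _ => by dsimp only; split_ifs <;> norm_num

theorem sum_bcast_flip_le {ω : ℝ} (hω : 0 ≤ ω) :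
    ∑ σ : Vtx b h → Bool, bcast b h ω σ *
        (if Rfun σ (treeRoot b h) = true ∧
            Rfun (Function.update σ (pathVtx b h hb (Fin.last h))
              (!σ (pathVtx b h hb (Fin.last h)))) (treeRoot b h) = false
         then 1 else 0) ≤
      ∑ σ : Vtx b h → Bool, bcast b h ω σ * ∏ d : Fin h,
        (if σ (pathVtx b h hb d.castSucc) = false then gval b (h - d - 1) ω ^ (b - 1) else 1) := by
  let F (z : Fin (h + 1) → Bool) (d : Fin h) (_ : Fin b) (r : Bool) : ℝ :=
    if z d.castSucc = false then (if r = false then 1 else 0) else 1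
  have hE (z : Fin (h + 1) → Bool) (d : Fin h) :
      ∏ j ∈ univ.erase ⟨0, hb⟩, ruleExpect b (h - d - 1) ω (z d.castSucc) (F z d j) =
        if z d.castSucc = false then gval b (h - d - 1) ω ^ (b - 1) else 1 := by
    by_cases hz : z d.castSucc = false
    · simp only [F, hz, if_true, ruleExpect_false_eq_gval, prod_const,
        card_erase_of_mem (mem_univ _), card_univ, Fintype.card_fin]
    · simp only [F, hz, Bool.true_eq_false, if_false, ruleExpect_one, prod_const_one]
  calc _ ≤ ∑ σ, bcast b h ω σ * offPathProd hb (F (pathSpins hb σ)) σ :=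
        sum_le_sum fun σ _ => mul_le_mul_of_nonneg_left (indicator_flip_le_offPathProd hb σ)
          (bcast_eq_bcastFrom σ ▸ bcastFrom_nonneg hω false σ)
    _ = _ := by
        rw [sum_bcast_mul_offPathProd_pathSpins]
        simp only [hE]
        rfl

end Flip

/-- Path decomposition for the sensitivity of the bottom-up reconstruction rule `A`:
conditioned on the path spins, for an off-path child `w` of an unoccupied path vertex
at depth `d`, the event `R_σ(w)=0` has conditional probability `g_{h−d−1}`; and
consequently `ν_h(A(σ)=1 ∧ A(σ^û)=0) ≤ E_{σ∼ν_h}[∏_{d: σ(u_d)=0} g_{h−d−1}^{b−1}]`,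
where `û` is a fixed leaf and `u_d` the path vertex at depth `d`. -/
theorem stmt17 (b h : ℕ) (hb : 0 < b) (ω : ℝ) (hω : 0 < ω) :
    (∀ z : Fin (h + 1) → Bool, ∀ d : Fin h, ∀ j : Fin b, j ≠ ⟨0, hb⟩ →
      z d.castSucc = false →
      (∑ σ : Vtx b h → Bool,
          if (∀ e, σ (pathVtx b h hb e) = z e) ∧
              Rfun σ (offChild b h hb d j) = false
          then bcast b h ω σ else 0) =
        (∑ σ : Vtx b h → Bool,
          if ∀ e, σ (pathVtx b h hb e) = z e then bcast b h ω σ else 0) *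
          gval b (h - (d : ℕ) - 1) ω) ∧
    (∑ σ : Vtx b h → Bool,
        bcast b h ω σ *
          (if Rfun σ (treeRoot b h) = true ∧
              Rfun (Function.update σ (pathVtx b h hb (Fin.last h))
                (!σ (pathVtx b h hb (Fin.last h)))) (treeRoot b h) = false
           then 1 else 0)) ≤
      ∑ σ : Vtx b h → Bool,
        bcast b h ω σ *
          ∏ d : Fin h,
            (if σ (pathVtx b h hb d.castSucc) = false
             then gval b (h - (d : ℕ) - 1) ω ^ (b - 1) else 1) := by
  refine ⟨fun z d j hj hz => ?_, sum_bcast_flip_le hb hω.le⟩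
  simpa only [pathSpins, funext_iff] using sum_fiber_offChild_Rfun_eq_false hb ω z d hj hz
end
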